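/- For all g, g' ∈ SL_n(ℂ), the following two inequalities hold for the Euclidean norm on ℝⁿ: ‖μ(gg') − μ(g)‖ ≤ ‖μ(g')‖ and ‖μ(gg') − μ(g')‖ ≤ ‖μ(g)‖, where μ(g) = (log σ₁(g), …, log σ_n(g)) ∈ ℝⁿ. -/

import Mathlib

open Matrix

/-- The Cartan projection μ(g) = (log σ₁(g), …, log σ_n(g)) ∈ ℝⁿ (0-indexed:
`cartanProj g i = log σ_{i+1}(g)`), where σ₁(g) ≥ … ≥ σ_n(g) are the singular
values of g, i.e. the square roots of the eigenvalues of gᴴg (gᴴ the conjugate transpose)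
listed in decreasing order with multiplicity.  It is valued in `EuclideanSpace ℝ
(Fin n)`, i.e. ℝⁿ with the Euclidean norm. -/
noncomputable def cartanProj {n : ℕ} (g : Matrix (Fin n) (Fin n) ℂ) :
    EuclideanSpace ℝ (Fin n) :=
  WithLp.toLp 2 fun i =>
    Real.log (Real.sqrt
      (((Matrix.isHermitian_conjTranspose_mul_self g).eigenvalues ∘
        (Tuple.sort (Matrix.isHermitian_conjTranspose_mul_self g).eigenvalues)) i.rev))

/-!
Write `σ₁(g) ≥ … ≥ σₙ(g)` for the singular values. By Weyl's monotonicity principle,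
`X Xᴴ ≤ Y Yᴴ` in the Loewner order implies `σᵢ(X) ≤ σᵢ(Y)` for every `i`. Given invertible
`A, B` and `s = σₖ(B)`, let `Q` be the square root of `max(B Bᴴ, s²)`; then
`σᵢ(A B) ≤ σᵢ(A Q)`, `s σᵢ(A) ≤ σᵢ(A Q)` and `|det Q| = ∏ⱼ max(σⱼ(B), s)`. Comparing
determinants of `A Q` and `A` gives the multiplicative Lidskii inequality: for any `k`
indices `S`, `∑_{i ∈ S} (log σᵢ(A B) - log σᵢ(A)) ≤ ∑_{j ≤ k} log σⱼ(B)`, with equality of the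
full sums since `|det (A B)| = |det A| |det B|`. So `μ(A B) - μ(A)` is majorized by `μ(B)`, and
Abel summation turns majorization into the bound on Euclidean norms. The second inequality is
the first one for the transposes, as `μ(gᵀ) = μ(g)`.
-/

open Finset Module RCLike
open scoped InnerProductSpace

namespace Tuple

variable {n : ℕ} {α : Type*} [LinearOrder α]

noncomputable def sortDesc (f : Fin n → α) : Fin n → α :=
  fun i => (f ∘ sort f) i.rev

theorem sortDesc_eq_comp (f : Fin n → α) :
    sortDesc f = f ∘ (Fin.revPerm.trans (sort f) : Equiv.Perm (Fin n)) :=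
  rfl

theorem antitone_sortDesc (f : Fin n → α) : Antitone (sortDesc f) :=
  fun _ _ hij => monotone_sort f (Fin.rev_le_rev.2 hij)

theorem map_univ_sortDesc (f : Fin n → α) :
    univ.val.map (sortDesc f) = univ.val.map f := by
  rw [sortDesc_eq_comp, ← Multiset.map_map, Multiset.map_univ_val_equiv]

theorem sum_comp_sortDesc {β : Type*} [AddCommMonoid β] (f : Fin n → α) (F : α → β) :
    ∑ i, F (sortDesc f i) = ∑ i, F (f i) :=
  Equiv.sum_comp (Fin.revPerm.trans (sort f)) (F ∘ f)

theorem prod_comp_sortDesc {β : Type*} [CommMonoid β] (f : Fin n → α) (F : α → β) :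
    ∏ i, F (sortDesc f i) = ∏ i, F (f i) :=
  Equiv.prod_comp (Fin.revPerm.trans (sort f)) (F ∘ f)

theorem eq_of_antitone_of_map_univ_eq {f g : Fin n → α} (hf : Antitone f) (hg : Antitone g)
    (h : univ.val.map f = univ.val.map g) : f = g := by
  rw [Fin.univ_val_map, Fin.univ_val_map, Multiset.coe_eq_coe] at h
  exact List.ofFn_injective (h.eq_of_sortedGE hf.sortedGE_ofFn hg.sortedGE_ofFn)

theorem sortDesc_eq_of_map_univ_eq {f g : Fin n → α} (h : univ.val.map f = univ.val.map g) :
    sortDesc f = sortDesc g :=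
  eq_of_antitone_of_map_univ_eq (antitone_sortDesc f) (antitone_sortDesc g)
    (by rw [map_univ_sortDesc, map_univ_sortDesc, h])

theorem sortDesc_comp {β : Type*} [LinearOrder β] {φ : α → β} (hφ : Monotone φ)
    (f : Fin n → α) : sortDesc (φ ∘ f) = φ ∘ sortDesc f :=
  eq_of_antitone_of_map_univ_eq (antitone_sortDesc _) (hφ.comp_antitone (antitone_sortDesc f))
    (by rw [map_univ_sortDesc, ← Multiset.map_map, ← Multiset.map_map, map_univ_sortDesc])

theorem exists_sum_Iic_sortDesc_eq [AddCommMonoid α] (f : Fin n → α) (k : Fin n) :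
    ∃ S : Finset (Fin n), #S = k + 1 ∧ ∑ i ∈ Iic k, sortDesc f i = ∑ i ∈ S, f i := by
  refine ⟨(Iic k).map (Fin.revPerm.trans (sort f)).toEmbedding, by simp, ?_⟩
  rw [sum_map]
  rfl

end Tuple

theorem Antitone.sum_comp_max_apply {n : ℕ} {α β : Type*} [LinearOrder α] [AddCommMonoid β]
    {f : Fin n → α} (hf : Antitone f) (F : α → β) (k : Fin n) :
    ∑ j, F (max (f j) (f k)) = ∑ j ∈ Iic k, F (f j) + #(Iic k)ᶜ • F (f k) := by
  rw [← sum_add_sum_compl (Iic k), ← sum_const]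
  congr 1
  · exact sum_congr rfl fun j hj => by rw [max_eq_left (hf (mem_Iic.1 hj))]
  · refine sum_congr rfl fun j hj => ?_
    rw [mem_compl, mem_Iic, not_le] at hj
    rw [max_eq_right (hf hj.le)]

open Tuple

section Majorization

variable {R : Type*} [CommRing R] [LinearOrder R] [IsStrictOrderedRing R]

theorem Fin.sum_mul_le_mul_sum_of_antitone {n : ℕ} {x z : Fin (n + 1) → R} (hx : Antitone x)
    (hz : ∀ k, ∑ i ∈ Iic k, z i ≤ 0) : ∑ i, x i * z i ≤ x (Fin.last n) * ∑ i, z i := by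
  induction n with
  | zero => simp
  | succ m ih =>
    have hz' : ∀ k, ∑ i ∈ Iic k, z (Fin.castSucc i) ≤ 0 := fun k => by
      simpa [← Fin.map_castSuccEmb_Iic] using hz k.castSucc
    have hprefix : ∑ i : Fin (m + 1), z i.castSucc ≤ 0 := by
      simpa [Iic_top] using hz' ⊤
    have hstep := mul_le_mul_of_nonpos_right (hx (Fin.le_last (Fin.last m).castSucc)) hprefix
    have hih := ih (hx.comp_monotone Fin.strictMono_castSucc.monotone) hz'
    rw [Fin.sum_univ_castSucc (fun i => x i * z i), Fin.sum_univ_castSucc z]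
    simp only [Function.comp_apply] at hih
    linarith

/-- Majorization bounds the sum of squares: Abel summation against the decreasing rearrangement
`x↓` of `x` gives `∑ x↓ (x↓ - y) ≤ 0`. -/
theorem sum_sq_le_sum_sq_of_sum_le {n : ℕ} {x y : Fin n → R}
    (h : ∀ (k : Fin n) (S : Finset (Fin n)), #S = k + 1 → ∑ i ∈ S, x i ≤ ∑ i ∈ Iic k, y i)
    (htot : ∑ i, x i = ∑ i, y i) : ∑ i, x i ^ 2 ≤ ∑ i, y i ^ 2 := by
  cases n with
  | zero => simp
  | succ m =>
    have hprefix : ∀ k, ∑ i ∈ Iic k, (sortDesc x i - y i) ≤ 0 := fun k => by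
      obtain ⟨S, hS, hsum⟩ := exists_sum_Iic_sortDesc_eq x k
      rw [sum_sub_distrib, sub_nonpos]
      exact hsum ▸ h k S hS
    have htot' : ∑ i, sortDesc x i = ∑ i, y i := (sum_comp_sortDesc x id).trans htot
    have habel : ∑ i, sortDesc x i ^ 2 ≤ ∑ i, sortDesc x i * y i := by
      have := Fin.sum_mul_le_mul_sum_of_antitone (antitone_sortDesc x) hprefix
      simpa [mul_sub, sum_sub_distrib, htot', sq] using this
    have hamgm : 2 * ∑ i, sortDesc x i * y i ≤ ∑ i, sortDesc x i ^ 2 + ∑ i, y i ^ 2 := by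
      rw [← sum_add_distrib, mul_sum]
      exact sum_le_sum fun i _ => by nlinarith [sq_nonneg (sortDesc x i - y i)]
    rw [← sum_comp_sortDesc x (· ^ 2)]
    linarith

end Majorization

namespace OrthonormalBasis

variable {𝕜 E ι : Type*} [RCLike 𝕜] [NormedAddCommGroup E] [InnerProductSpace 𝕜 E] [Fintype ι]
  {T : E →ₗ[𝕜] E} (b : OrthonormalBasis ι 𝕜 E) {μ : ι → ℝ}

theorem re_inner_map_self_eq (hb : ∀ j, T (b j) = (μ j : 𝕜) • b j) (x : E) :
    re ⟪x, T x⟫_𝕜 = ∑ j, μ j * ‖⟪b j, x⟫_𝕜‖ ^ 2 := by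
  have hTx : T x = ∑ j, ((μ j : 𝕜) * ⟪b j, x⟫_𝕜) • b j := by
    conv_lhs => rw [← b.sum_repr' x]
    simp [hb, smul_smul, mul_comm]
  rw [hTx, inner_sum, map_sum]
  refine sum_congr rfl fun j _ => ?_
  rw [inner_smul_right, ← inner_conj_symm x (b j), mul_assoc, RCLike.mul_conj]
  norm_cast

theorem inner_eq_zero_of_mem_span {s : Set ι} {x : E} (hx : x ∈ Submodule.span 𝕜 (b '' s))
    {j : ι} (hj : j ∉ s) : ⟪b j, x⟫_𝕜 = 0 := by
  have : Submodule.span 𝕜 (b '' s) ≤ (𝕜 ∙ b j)ᗮ := Submodule.span_le.2 <| by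
    rintro _ ⟨i, hi, rfl⟩
    exact Submodule.mem_orthogonal_singleton_iff_inner_right.2
      (b.orthonormal.2 (ne_of_mem_of_not_mem hi hj).symm)
  exact Submodule.mem_orthogonal_singleton_iff_inner_right.1 (this hx)

theorem finrank_span_image (s : Finset ι) : finrank 𝕜 (Submodule.span 𝕜 (b '' s)) = #s := by
  rw [Set.image_eq_range]
  exact (finrank_span_eq_card
    (b.orthonormal.linearIndependent.comp (Subtype.val : s → ι) Subtype.val_injective)).trans
    (by simp)

theorem re_inner_map_self_le_of_mem_span (hb : ∀ j, T (b j) = (μ j : 𝕜) • b j) {s : Set ι}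
    {c : ℝ} (hc : ∀ j ∈ s, μ j ≤ c) {x : E} (hx : x ∈ Submodule.span 𝕜 (b '' s)) :
    re ⟪x, T x⟫_𝕜 ≤ c * ‖x‖ ^ 2 := by
  rw [b.re_inner_map_self_eq hb, ← b.sum_sq_norm_inner_right, mul_sum]
  refine sum_le_sum fun j _ => ?_
  by_cases hj : j ∈ s
  · exact mul_le_mul_of_nonneg_right (hc j hj) (sq_nonneg _)
  · simp [b.inner_eq_zero_of_mem_span hx hj]

theorem le_re_inner_map_self_of_mem_span (hb : ∀ j, T (b j) = (μ j : 𝕜) • b j) {s : Set ι}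
    {c : ℝ} (hc : ∀ j ∈ s, c ≤ μ j) {x : E} (hx : x ∈ Submodule.span 𝕜 (b '' s)) :
    c * ‖x‖ ^ 2 ≤ re ⟪x, T x⟫_𝕜 := by
  have hb' : ∀ j, (-T) (b j) = ((-μ j : ℝ) : 𝕜) • b j := fun j => by simp [hb]
  have := b.re_inner_map_self_le_of_mem_span hb' (c := -c) (fun j hj => neg_le_neg (hc j hj)) hx
  simp only [LinearMap.neg_apply, inner_neg_right, map_neg] at this
  linarith

/-- Weyl's monotonicity principle, proved by the Courant–Fischer dimension count: the span of the
top `i + 1` eigenvectors of `T` meets the span of the bottom `n - i` eigenvectors of `S`. -/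
theorem le_of_re_inner_map_self_le {n : ℕ} {T S : E →ₗ[𝕜] E} (bT bS : OrthonormalBasis (Fin n) 𝕜 E)
    {μ ν : Fin n → ℝ} (hμ : Antitone μ) (hν : Antitone ν) (hT : ∀ j, T (bT j) = (μ j : 𝕜) • bT j)
    (hS : ∀ j, S (bS j) = (ν j : 𝕜) • bS j) (hTS : ∀ x, re ⟪x, T x⟫_𝕜 ≤ re ⟪x, S x⟫_𝕜)
    (i : Fin n) : μ i ≤ ν i := by
  by_contra! hlt
  have : FiniteDimensional 𝕜 E := bT.toBasis.finiteDimensional_of_finite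
  set V := Submodule.span 𝕜 (bT '' ↑(Iic i))
  set W := Submodule.span 𝕜 (bS '' ↑(Ici i))
  have hdim : finrank 𝕜 E < finrank 𝕜 V + finrank 𝕜 W := by
    rw [bT.finrank_span_image, bS.finrank_span_image, finrank_eq_card_basis bT.toBasis]
    simp only [Fin.card_Iic, Fin.card_Ici, Fintype.card_fin]
    omega
  obtain ⟨x, hxV, hxW, hx⟩ : ∃ x ∈ V, x ∈ W ∧ x ≠ 0 := by
    by_contra! h
    exact hdim.not_ge (Submodule.finrank_add_finrank_le_of_disjoint (Submodule.disjoint_def.2 h))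
  have hlow := bT.le_re_inner_map_self_of_mem_span hT (fun j hj => hμ (mem_Iic.1 hj)) hxV
  have hup := bS.re_inner_map_self_le_of_mem_span hS (fun j hj => hν (mem_Ici.1 hj)) hxW
  exact ((hlow.trans (hTS x)).trans hup).not_gt (mul_lt_mul_of_pos_right hlt (by positivity))

end OrthonormalBasis

namespace Matrix

open Polynomial
open scoped MatrixOrder ComplexOrder

variable {𝕜 : Type*} [RCLike 𝕜] {n : ℕ}

theorem charpoly_conjStarAlgAut (U : unitary (Matrix (Fin n) (Fin n) 𝕜))
    (M : Matrix (Fin n) (Fin n) 𝕜) : (Unitary.conjStarAlgAut 𝕜 _ U M).charpoly = M.charpoly := by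
  rw [Unitary.conjStarAlgAut_apply, charpoly_mul_comm, ← mul_assoc, Unitary.coe_star_mul_self,
    one_mul]

theorem det_conjStarAlgAut (U : unitary (Matrix (Fin n) (Fin n) 𝕜)) (M : Matrix (Fin n) (Fin n) 𝕜) :
    (Unitary.conjStarAlgAut 𝕜 _ U M).det = M.det := by
  rw [Unitary.conjStarAlgAut_apply, det_mul, det_mul, mul_right_comm, ← det_mul,
    Unitary.mul_star_self_of_mem U.2, det_one, one_mul]

theorem conjStarAlgAut_diagonal_mul_conjTranspose (U : unitary (Matrix (Fin n) (Fin n) 𝕜))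
    (d : Fin n → ℝ) :
    Unitary.conjStarAlgAut 𝕜 _ U (diagonal (RCLike.ofReal ∘ d)) *
      (Unitary.conjStarAlgAut 𝕜 _ U (diagonal (RCLike.ofReal ∘ d)))ᴴ =
    Unitary.conjStarAlgAut 𝕜 _ U (diagonal (RCLike.ofReal ∘ (d ^ 2))) := by
  rw [← star_eq_conjTranspose, ← map_star, ← map_mul, star_eq_conjTranspose, diagonal_conjTranspose,
    diagonal_mul_diagonal]
  congr 2
  ext j
  simp [sq]

theorem diagonal_ofReal_le_diagonal_ofReal {a b : Fin n → ℝ} (h : a ≤ b) :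
    diagonal (RCLike.ofReal ∘ a : Fin n → 𝕜) ≤ diagonal (RCLike.ofReal ∘ b) := by
  rw [le_iff, diagonal_sub, posSemidef_diagonal_iff]
  intro j
  simpa [sub_nonneg] using h j

theorem IsHermitian.toEuclideanLin_eigenvectorBasis {A : Matrix (Fin n) (Fin n) 𝕜}
    (hA : A.IsHermitian) (j : Fin n) :
    toEuclideanLin A (hA.eigenvectorBasis j) = (hA.eigenvalues j : 𝕜) • hA.eigenvectorBasis j := by
  rw [toLpLin_apply, hA.mulVec_eigenvectorBasis, WithLp.toLp_smul, WithLp.toLp_ofLp,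
    RCLike.real_smul_eq_coe_smul (K := 𝕜)]

theorem IsHermitian.sortDesc_eigenvalues_le_of_le {A B : Matrix (Fin n) (Fin n) 𝕜}
    (hA : A.IsHermitian) (hB : B.IsHermitian) (hAB : A ≤ B) (i : Fin n) :
    sortDesc hA.eigenvalues i ≤ sortDesc hB.eigenvalues i := by
  refine OrthonormalBasis.le_of_re_inner_map_self_le (T := toEuclideanLin A) (S := toEuclideanLin B)
    (hA.eigenvectorBasis.reindex (Fin.revPerm.trans (sort hA.eigenvalues)).symm)
    (hB.eigenvectorBasis.reindex (Fin.revPerm.trans (sort hB.eigenvalues)).symm)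
    (antitone_sortDesc _) (antitone_sortDesc _) (fun j => ?_) (fun j => ?_) (fun x => ?_) i
  · rw [OrthonormalBasis.reindex_apply, Equiv.symm_symm]
    exact hA.toEuclideanLin_eigenvectorBasis _
  · rw [OrthonormalBasis.reindex_apply, Equiv.symm_symm]
    exact hB.toEuclideanLin_eigenvectorBasis _
  · have hpos := (isPositive_toEuclideanLin_iff.2 (le_iff.1 hAB)).2 x
    rw [map_sub, LinearMap.sub_apply, inner_sub_left, map_sub, sub_nonneg] at hpos
    rwa [inner_re_symm, inner_re_symm x]

theorem IsHermitian.eigenvalues_congr {A B : Matrix (Fin n) (Fin n) 𝕜} (hA : A.IsHermitian)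
    (hB : B.IsHermitian) (h : A = B) : hA.eigenvalues = hB.eigenvalues := by
  subst h
  rfl

theorem IsHermitian.sortDesc_eigenvalues_eq_of_charpoly_eq {A : Matrix (Fin n) (Fin n) 𝕜}
    (hA : A.IsHermitian) {d : Fin n → ℝ} (h : A.charpoly = ∏ i, (X - C (d i : 𝕜))) :
    sortDesc hA.eigenvalues = sortDesc d := by
  apply sortDesc_eq_of_map_univ_eq
  have hroots : ∀ f : Fin n → ℝ,
      (∏ i, (X - C (f i : 𝕜))).roots = (univ.val.map f).map RCLike.ofReal := fun f => by
    rw [roots_prod _ _ (prod_ne_zero_iff.2 fun i _ => X_sub_C_ne_zero _)]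
    simp only [roots_X_sub_C, Multiset.bind_singleton, Multiset.map_map]
    rfl
  have hcharpoly := congrArg roots (hA.charpoly_eq.symm.trans h)
  rw [hroots, hroots] at hcharpoly
  exact Multiset.map_injective RCLike.ofReal_injective hcharpoly

theorem IsHermitian.sortDesc_eigenvalues_eq_of_eq_conj {A : Matrix (Fin n) (Fin n) 𝕜}
    (hA : A.IsHermitian) (U : unitary (Matrix (Fin n) (Fin n) 𝕜)) {d : Fin n → ℝ}
    (h : A = Unitary.conjStarAlgAut 𝕜 _ U (diagonal (RCLike.ofReal ∘ d))) :
    sortDesc hA.eigenvalues = sortDesc d :=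
  hA.sortDesc_eigenvalues_eq_of_charpoly_eq <| by
    rw [h, charpoly_conjStarAlgAut, charpoly_diagonal]
    rfl

theorem IsHermitian.sortDesc_eigenvalues_smul {A : Matrix (Fin n) (Fin n) 𝕜} (hA : A.IsHermitian)
    {r : ℝ} (hr : 0 ≤ r) (hrA : (r • A).IsHermitian) :
    sortDesc hrA.eigenvalues = r • sortDesc hA.eigenvalues := by
  rw [hrA.sortDesc_eigenvalues_eq_of_eq_conj hA.eigenvectorUnitary (d := r • hA.eigenvalues)]
  · exact sortDesc_comp (monotone_mul_left_of_nonneg hr) _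
  · conv_lhs => rw [hA.spectral_theorem]
    rw [RCLike.real_smul_eq_coe_smul (K := 𝕜), ← map_smul, ← diagonal_smul]
    congr 2
    ext i
    simp

theorem IsHermitian.ofReal_prod_sortDesc_eigenvalues {A : Matrix (Fin n) (Fin n) 𝕜}
    (hA : A.IsHermitian) : ((∏ i, sortDesc hA.eigenvalues i : ℝ) : 𝕜) = A.det := by
  rw [hA.det_eq_prod_eigenvalues, RCLike.ofReal_prod, prod_comp_sortDesc]

noncomputable def singularValues (M : Matrix (Fin n) (Fin n) 𝕜) (i : Fin n) : ℝ :=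
  √(sortDesc (isHermitian_conjTranspose_mul_self M).eigenvalues i)

theorem antitone_singularValues (M : Matrix (Fin n) (Fin n) 𝕜) : Antitone M.singularValues :=
  fun _ _ hij => Real.sqrt_le_sqrt (antitone_sortDesc _ hij)

theorem singularValues_eq_sqrt_mul_conjTranspose (M : Matrix (Fin n) (Fin n) 𝕜) :
    M.singularValues =
      fun i => √(sortDesc (isHermitian_mul_conjTranspose_self M).eigenvalues i) := by
  ext i
  rw [singularValues, (IsHermitian.eigenvalues_eq_eigenvalues_iff _ _).2 (charpoly_mul_comm _ _)]

theorem singularValues_eq_sortDesc_sqrt (M : Matrix (Fin n) (Fin n) 𝕜) :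
    M.singularValues =
      sortDesc (Real.sqrt ∘ (isHermitian_mul_conjTranspose_self M).eigenvalues) := by
  rw [sortDesc_comp (fun _ _ => Real.sqrt_le_sqrt), singularValues_eq_sqrt_mul_conjTranspose]
  rfl

theorem singularValues_transpose (M : Matrix (Fin n) (Fin n) 𝕜) :
    Mᵀ.singularValues = M.singularValues := by
  have h : (Mᵀᴴ * Mᵀ).charpoly = (M * Mᴴ).charpoly := by
    rw [← charpoly_transpose (M * Mᴴ), transpose_mul, conjTranspose_transpose,
      transpose_conjTranspose]
  rw [singularValues_eq_sqrt_mul_conjTranspose M]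
  ext i
  rw [singularValues, ((isHermitian_conjTranspose_mul_self Mᵀ).eigenvalues_eq_eigenvalues_iff
    (isHermitian_mul_conjTranspose_self M)).2 h]

theorem singularValues_pos {M : Matrix (Fin n) (Fin n) 𝕜} (hM : IsUnit M.det) (i : Fin n) :
    0 < M.singularValues i :=
  Real.sqrt_pos.2 ((PosDef.conjTranspose_mul_self M
    (mulVec_injective_iff_isUnit.2 ((isUnit_iff_isUnit_det M).2 hM))).eigenvalues_pos _)

theorem prod_singularValues (M : Matrix (Fin n) (Fin n) 𝕜) : ∏ i, M.singularValues i = ‖M.det‖ := by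
  have hprod :
      ∏ i, sortDesc (isHermitian_conjTranspose_mul_self M).eigenvalues i = ‖M.det‖ ^ 2 := by
    apply RCLike.ofReal_injective (K := 𝕜)
    rw [IsHermitian.ofReal_prod_sortDesc_eigenvalues, det_mul, det_conjTranspose, RCLike.star_def,
      RCLike.conj_mul, RCLike.ofReal_pow]
  simp only [singularValues]
  rw [← Real.sqrt_prod (x := sortDesc (isHermitian_conjTranspose_mul_self M).eigenvalues) _
    fun i _ => eigenvalues_conjTranspose_mul_self_nonneg M _, hprod,
    Real.sqrt_sq (norm_nonneg _)]

theorem sum_log_singularValues {M : Matrix (Fin n) (Fin n) 𝕜} (hM : IsUnit M.det) :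
    ∑ i, Real.log (M.singularValues i) = Real.log ‖M.det‖ := by
  rw [← Real.log_prod fun i _ => (singularValues_pos hM i).ne', prod_singularValues]

theorem singularValues_smul (M : Matrix (Fin n) (Fin n) 𝕜) {c : ℝ} (hc : 0 ≤ c) :
    (c • M).singularValues = c • M.singularValues := by
  have hcM : (c • M)ᴴ * (c • M) = (c ^ 2) • (Mᴴ * M) := by
    rw [conjTranspose_smul, star_trivial, smul_mul_smul_comm, sq]
  ext i
  have hH := isHermitian_conjTranspose_mul_self M
  rw [singularValues, IsHermitian.eigenvalues_congr _ (hH.smul (IsSelfAdjoint.all _)) hcM,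
    hH.sortDesc_eigenvalues_smul (sq_nonneg c), Pi.smul_apply,
    smul_eq_mul, Real.sqrt_mul (sq_nonneg c), Real.sqrt_sq hc]
  rfl

theorem singularValues_le_of_mul_conjTranspose_le {M N : Matrix (Fin n) (Fin n) 𝕜}
    (h : M * Mᴴ ≤ N * Nᴴ) (i : Fin n) : M.singularValues i ≤ N.singularValues i := by
  simp only [singularValues_eq_sqrt_mul_conjTranspose]
  exact Real.sqrt_le_sqrt (IsHermitian.sortDesc_eigenvalues_le_of_le _ _ h i)

theorem singularValues_mul_le_of_le (M : Matrix (Fin n) (Fin n) 𝕜) {P Q : Matrix (Fin n) (Fin n) 𝕜}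
    (h : P * Pᴴ ≤ Q * Qᴴ) (i : Fin n) : (M * P).singularValues i ≤ (M * Q).singularValues i := by
  refine singularValues_le_of_mul_conjTranspose_le ?_ i
  simpa only [conjTranspose_mul, star_eq_conjTranspose, mul_assoc] using
    star_right_conjugate_le_conjugate h M

/-- `Q` is the square root of `max (B Bᴴ) (s² • 1)`, formed in an eigenbasis of `B Bᴴ`. -/
theorem exists_mul_conjTranspose_ge (B : Matrix (Fin n) (Fin n) 𝕜) {s : ℝ} (hs : 0 < s) :
    ∃ Q : Matrix (Fin n) (Fin n) 𝕜, B * Bᴴ ≤ Q * Qᴴ ∧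
      (s • 1 : Matrix (Fin n) (Fin n) 𝕜) * (s • 1)ᴴ ≤ Q * Qᴴ ∧
      ‖Q.det‖ = ∏ j, max (B.singularValues j) s := by
  have hH := isHermitian_mul_conjTranspose_self B
  set φ := Unitary.conjStarAlgAut 𝕜 (Matrix (Fin n) (Fin n) 𝕜) hH.eigenvectorUnitary
  set r : Fin n → ℝ := fun j => max √(hH.eigenvalues j) s
  have hr : ∀ j, hH.eigenvalues j ≤ r j ^ 2 ∧ s ^ 2 ≤ r j ^ 2 := fun j =>
    ⟨(Real.sqrt_le_iff.1 (le_max_left _ _)).2, pow_le_pow_left₀ hs.le (le_max_right _ _) 2⟩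
  refine ⟨φ (diagonal (RCLike.ofReal ∘ r)), ?_, ?_, ?_⟩
  · rw [conjStarAlgAut_diagonal_mul_conjTranspose]
    conv_lhs => rw [hH.spectral_theorem]
    exact (map_le_map_iff φ).2 (diagonal_ofReal_le_diagonal_ofReal fun j => (hr j).1)
  · have hs1 : (s • 1 : Matrix (Fin n) (Fin n) 𝕜) = φ (diagonal (RCLike.ofReal ∘ fun _ => s)) := by
      rw [Unitary.conjStarAlgAut_apply, Function.comp_def, ← smul_one_eq_diagonal, mul_smul_comm,
        smul_mul_assoc, mul_one, Unitary.mul_star_self_of_mem hH.eigenvectorUnitary.2,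
        RCLike.real_smul_eq_coe_smul (K := 𝕜)]
    rw [hs1, conjStarAlgAut_diagonal_mul_conjTranspose, conjStarAlgAut_diagonal_mul_conjTranspose]
    exact (map_le_map_iff φ).2 (diagonal_ofReal_le_diagonal_ofReal fun j => (hr j).2)
  · rw [det_conjStarAlgAut, det_diagonal, singularValues_eq_sortDesc_sqrt,
      prod_comp_sortDesc _ (fun t => max t s)]
    simp only [Function.comp_apply, norm_prod, RCLike.norm_ofReal]
    exact prod_congr rfl fun j _ => abs_of_pos (hs.trans_le (le_max_right _ _))

open Real in
/-- The multiplicative Lidskii (Gel'fand–Naimark) inequality. -/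
theorem sum_log_singularValues_mul_sub_le {A B : Matrix (Fin n) (Fin n) 𝕜} (hA : IsUnit A.det)
    (hB : IsUnit B.det) (k : Fin n) {S : Finset (Fin n)} (hS : #S = k + 1) :
    ∑ i ∈ S, (log ((A * B).singularValues i) - log (A.singularValues i)) ≤
      ∑ j ∈ Iic k, log (B.singularValues j) := by
  set s := B.singularValues k
  have hs : 0 < s := singularValues_pos hB k
  obtain ⟨Q, hBQ, hsQ, hdetQ⟩ := exists_mul_conjTranspose_ge B hs
  have hmax : ∀ j, 0 < max (B.singularValues j) s := fun j => hs.trans_le (le_max_right _ _)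
  have hQ : IsUnit Q.det := by
    rw [isUnit_iff_ne_zero, ← norm_ne_zero_iff, hdetQ]
    exact prod_ne_zero_iff.2 fun j _ => (hmax j).ne'
  have hAQ : IsUnit (A * Q).det := by rw [det_mul]; exact hA.mul hQ
  set g : Fin n → ℝ := fun i => log ((A * Q).singularValues i) - log (A.singularValues i)
  have hupper : ∀ i, log ((A * B).singularValues i) - log (A.singularValues i) ≤ g i := fun i =>
    sub_le_sub_right (log_le_log (singularValues_pos (by rw [det_mul]; exact hA.mul hB) i)
      (singularValues_mul_le_of_le A hBQ i)) _
  have hlower : ∀ i, log s ≤ g i := fun i => by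
    have hle := singularValues_mul_le_of_le A hsQ i
    rw [mul_smul_comm, mul_one, singularValues_smul _ hs.le, Pi.smul_apply, smul_eq_mul] at hle
    rw [le_sub_iff_add_le, ← log_mul hs.ne' (singularValues_pos hA i).ne']
    exact log_le_log (mul_pos hs (singularValues_pos hA i)) hle
  have htotal : ∑ i, g i = ∑ j, log (max (B.singularValues j) s) := by
    rw [sum_sub_distrib, sum_log_singularValues hAQ, sum_log_singularValues hA, det_mul, norm_mul,
      log_mul (norm_ne_zero_iff.2 hA.ne_zero) (norm_ne_zero_iff.2 hQ.ne_zero), hdetQ,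
      log_prod fun j _ => (hmax j).ne']
    ring
  calc ∑ i ∈ S, (log ((A * B).singularValues i) - log (A.singularValues i))
      ≤ ∑ i ∈ S, g i := sum_le_sum fun i _ => hupper i
    _ = ∑ i, g i - ∑ i ∈ Sᶜ, g i := by rw [← sum_add_sum_compl S g, add_sub_cancel_right]
    _ ≤ ∑ i, g i - #Sᶜ • log s := sub_le_sub_left (card_nsmul_le_sum _ _ _ fun i _ => hlower i) _
    _ = ∑ j ∈ Iic k, log (B.singularValues j) := by
      rw [htotal, (antitone_singularValues B).sum_comp_max_apply log k, card_compl, card_compl,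
        hS, Fin.card_Iic, add_sub_cancel_right]

end Matrix

open Matrix Real

theorem cartanProj_apply {n : ℕ} (M : Matrix (Fin n) (Fin n) ℂ) (i : Fin n) :
    cartanProj M i = log (M.singularValues i) :=
  rfl

theorem cartanProj_transpose {n : ℕ} (M : Matrix (Fin n) (Fin n) ℂ) :
    cartanProj Mᵀ = cartanProj M := by
  ext i
  rw [cartanProj_apply, cartanProj_apply, singularValues_transpose]

theorem norm_cartanProj_mul_sub_le {n : ℕ} {A B : Matrix (Fin n) (Fin n) ℂ} (hA : IsUnit A.det)
    (hB : IsUnit B.det) : ‖cartanProj (A * B) - cartanProj A‖ ≤ ‖cartanProj B‖ := by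
  rw [EuclideanSpace.norm_eq, EuclideanSpace.norm_eq]
  refine Real.sqrt_le_sqrt ?_
  simp only [PiLp.sub_apply, cartanProj_apply, Real.norm_eq_abs, sq_abs]
  refine sum_sq_le_sum_sq_of_sum_le (fun k S hS => sum_log_singularValues_mul_sub_le hA hB k hS) ?_
  rw [Finset.sum_sub_distrib, sum_log_singularValues (by rw [det_mul]; exact hA.mul hB),
    sum_log_singularValues hA, sum_log_singularValues hB, det_mul, norm_mul,
    log_mul (norm_ne_zero_iff.2 hA.ne_zero) (norm_ne_zero_iff.2 hB.ne_zero), add_sub_cancel_left]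

theorem stmt_12 (n : ℕ) (g g' : SpecialLinearGroup (Fin n) ℂ) :
    ‖cartanProj ((g * g' : SpecialLinearGroup (Fin n) ℂ) : Matrix (Fin n) (Fin n) ℂ)
        - cartanProj (g : Matrix (Fin n) (Fin n) ℂ)‖
      ≤ ‖cartanProj (g' : Matrix (Fin n) (Fin n) ℂ)‖ ∧
    ‖cartanProj ((g * g' : SpecialLinearGroup (Fin n) ℂ) : Matrix (Fin n) (Fin n) ℂ)
        - cartanProj (g' : Matrix (Fin n) (Fin n) ℂ)‖
      ≤ ‖cartanProj (g : Matrix (Fin n) (Fin n) ℂ)‖ := by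
  have hdet (h : SpecialLinearGroup (Fin n) ℂ) : IsUnit (h : Matrix (Fin n) (Fin n) ℂ).det := by
    rw [Matrix.SpecialLinearGroup.det_coe]
    exact isUnit_one
  rw [Matrix.SpecialLinearGroup.coe_mul]
  refine ⟨norm_cartanProj_mul_sub_le (hdet g) (hdet g'), ?_⟩
  have h := norm_cartanProj_mul_sub_le (A := (g' : Matrix (Fin n) (Fin n) ℂ)ᵀ)
    (B := (g : Matrix (Fin n) (Fin n) ℂ)ᵀ) (by rw [det_transpose]; exact hdet g')
    (by rw [det_transpose]; exact hdet g)
  rwa [← transpose_mul, cartanProj_transpose, cartanProj_transpose, cartanProj_transpose] at h
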